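/- Let F be a field with at least 3 elements, m ≥ n ≥ 2, and A, B ∈ M_{m,n}(F) with A ≠ B. Then rank(A − B) = 1 if and only if there exists R ∈ M_{m,n}(F) with R ≠ A and R ≠ B such that for every X ∈ M_{m,n}(F), if X − R has full rank then X − A has full rank or X − B has full rank. -/

import Mathlib

/-!
If `D = A - B` has rank one, take `R = A + t • D` with `t ∉ {0, -1}`. Then `X - A` and
`X - B` are `(X - R) + t • D` and `(X - R) + (t + 1) • D`, and a rank-one perturbation
`M + s • D` of an injective `M` can fail to be injective for at most one value of `s`.

Conversely, let `rank (A - B) ≥ 2` and `R ≠ A, B`, and put `P = A - R`, `Q = B - R`. There are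
independent `x, z` with `P x, Q z` independent: otherwise the ranges of `P` and `Q` both lie on
the line through one nonzero `P x`, and `P - Q = A - B` would have rank at most one. Since
`n ≤ m`, some injective `Y` has `Y x = P x` and `Y z = Q z`, and `X = Y + R` is a witness:
`X - R = Y` has full rank while `X - A = Y - P` kills `x` and `X - B = Y - Q` kills `z`.
-/

open Module Submodule LinearMap Function

theorem exists_ne_and_ne_of_three_distinct {α : Type*}
    (h3 : ∃ a b c : α, a ≠ b ∧ a ≠ c ∧ b ≠ c) (p q : α) : ∃ t, t ≠ p ∧ t ≠ q := by
  obtain ⟨a, b, c, hab, hac, hbc⟩ := h3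
  by_contra! h
  rcases eq_or_ne a p with rfl | ha
  · exact hbc ((h b hab.symm).trans (h c hac.symm).symm)
  · rcases eq_or_ne b p with rfl | hb
    · exact hac ((h a hab).trans (h c hbc.symm).symm)
    · exact hab ((h a ha).trans (h b hb).symm)

theorem Submodule.eq_top_of_compl_subset {R M : Type*} [Ring R] [AddCommGroup M] [Module R M]
    {S T : Submodule R M} (hT : T ≠ ⊤) (h : (T : Set M)ᶜ ⊆ S) : S = ⊤ := by
  obtain ⟨z, hz⟩ : ∃ z, z ∉ T := by simpa [eq_top_iff'] using hT
  refine eq_top_iff'.mpr fun v => ?_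
  by_cases hv : v ∈ T
  · have hvz : v + z ∉ T := fun h => hz (by simpa using T.sub_mem h hv)
    simpa using S.sub_mem (h hvz) (h hz)
  · exact h hv

theorem Module.Basis.sumExtend_apply_inl {K V ι : Type*} [Field K] [AddCommGroup V] [Module K V]
    {v : ι → V} (hv : LinearIndependent K v) (i : ι) : sumExtend hv (Sum.inl i) = v i := by
  simp only [sumExtend, reindex_apply, extend_apply_self]
  rfl

section LinearMap

variable {K V W : Type*} [Field K] [AddCommGroup V] [Module K V] [AddCommGroup W] [Module K W]

theorem LinearMap.injective_add_smul_or_injective_add_smul {M D : V →ₗ[K] W}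
    (hM : Injective M) (hD : finrank K (range D) = 1) {s s' : K} (hss' : s ≠ s') :
    Injective (M + s • D) ∨ Injective (M + s' • D) := by
  simp only [injective_iff_map_eq_zero, add_apply, smul_apply]
  by_contra! ⟨⟨x, hx, hx0⟩, ⟨y, hy, hy0⟩⟩
  have hDx : D x ≠ 0 := fun h => hx0 (hM (by simpa [h] using hx))
  obtain ⟨c, hc⟩ : ∃ c : K, c • D x = D y := by
    rw [← mem_span_singleton, ← eq_span_singleton_of_mem_of_finrank_eq_one hD
      (mem_range_self D x) hDx]
    exact mem_range_self D y
  -- both sides are mapped by `M` to `-(s * s' * c) • D x`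
  have hyx : s • y = (s' * c) • x := hM (by
    simp only [map_smul]
    linear_combination (norm := module) s • hy - (s' * c) • hx + (s * s') • hc)
  have hDc : ((s - s') * c) • D x = 0 := by
    have hD_yx := congrArg D hyx
    simp only [map_smul] at hD_yx
    linear_combination (norm := module) s • hc + hD_yx
  have hc0 : c = 0 := by simpa [hDx, sub_ne_zero.mpr hss'] using hDc
  exact hy0 (hM (by simpa [← hc, hc0] using hy))

theorem LinearMap.range_le_span_singleton_of_forall_not_linearIndependent
    (hV : 2 ≤ finrank K V) {f g : V →ₗ[K] W}
    (h : ∀ x z, LinearIndependent K ![x, z] → ¬LinearIndependent K ![f x, g z])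
    {x : V} (hx : f x ≠ 0) : range g ≤ K ∙ f x := by
  have hx0 : x ≠ 0 := by rintro rfl; simp at hx
  have hline : K ∙ x ≠ ⊤ := fun htop => by
    have := finrank_span_singleton (K := K) hx0
    rw [htop, finrank_top] at this
    omega
  refine range_le_iff_comap.mpr (eq_top_of_compl_subset hline fun z hz => ?_)
  by_contra hgz
  exact h x z
    ((LinearIndependent.pair_iff' hx0).mpr fun a ha => hz (mem_span_singleton.mpr ⟨a, ha⟩))
    ((LinearIndependent.pair_iff' hx).mpr fun a ha => hgz (mem_span_singleton.mpr ⟨a, ha⟩))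

theorem LinearMap.exists_linearIndependent_pair_apply (hV : 2 ≤ finrank K V)
    {f g : V →ₗ[K] W} (hf : f ≠ 0) (hg : g ≠ 0) (hfg : 2 ≤ finrank K (range (f - g))) :
    ∃ x z, LinearIndependent K ![x, z] ∧ LinearIndependent K ![f x, g z] := by
  by_contra! h
  obtain ⟨x, hx⟩ : ∃ x, f x ≠ 0 := by by_contra! h; exact hf (ext h)
  obtain ⟨z, hz⟩ : ∃ z, g z ≠ 0 := by by_contra! h; exact hg (ext h)
  have hg_le := range_le_span_singleton_of_forall_not_linearIndependent hV h hx
  have hf_le := range_le_span_singleton_of_forall_not_linearIndependent hV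
    (fun z x hzx hgf => h x z (LinearIndependent.pair_symm_iff.mpr hzx)
      (LinearIndependent.pair_symm_iff.mpr hgf)) hz
  have hfg_le : range (f - g) ≤ K ∙ f x := by
    rintro _ ⟨v, rfl⟩
    refine sub_mem ?_ (hg_le (mem_range_self g v))
    exact (hf_le.trans (span_singleton_le_iff_mem _ _ |>.mpr (hg_le (mem_range_self g z))))
      (mem_range_self f v)
  have := (Submodule.finrank_mono hfg_le).trans (finrank_span_singleton hx).le
  omega

theorem LinearMap.exists_injective_forall_apply_eq
    [FiniteDimensional K V] [FiniteDimensional K W] (hVW : finrank K V ≤ finrank K W)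
    {ι : Type*} {v : ι → V} {w : ι → W}
    (hv : LinearIndependent K v) (hw : LinearIndependent K w) :
    ∃ h : V →ₗ[K] W, Injective h ∧ ∀ i, h (v i) = w i := by
  let b := Basis.sumExtend hv
  let c := Basis.sumExtend hw
  have := Module.Finite.finite_basis b
  have := Module.Finite.finite_basis c
  have : Finite ι := .sum_left (Basis.sumExtendIndex hv)
  have : Finite (Basis.sumExtendIndex hv) := .sum_right ι
  have : Finite (Basis.sumExtendIndex hw) := .sum_right ι
  have hcard : Nat.card (Basis.sumExtendIndex hv) ≤ Nat.card (Basis.sumExtendIndex hw) := by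
    have := finrank_eq_nat_card_basis b
    have := finrank_eq_nat_card_basis c
    rw [Nat.card_sum] at *
    omega
  have := Fintype.ofFinite (Basis.sumExtendIndex hv)
  have := Fintype.ofFinite (Basis.sumExtendIndex hw)
  obtain ⟨e⟩ := Function.Embedding.nonempty_of_card_le
    (by simpa only [Fintype.card_eq_nat_card] using hcard)
  -- extend `v`, `w` to bases `b`, `c` and send the new vectors of `b` injectively to those of `c`
  refine ⟨c.repr.symm.toLinearMap ∘ₗ Finsupp.lmapDomain K K ((Embedding.refl ι).sumMap e) ∘ₗ
    b.repr.toLinearMap, ?_, fun i => ?_⟩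
  · exact c.repr.symm.injective.comp <| (Finsupp.mapDomain_injective
      ((Embedding.refl ι).sumMap e).injective).comp b.repr.injective
  · rw [← Basis.sumExtend_apply_inl hv, ← Basis.sumExtend_apply_inl hw]
    simp [b, c, Finsupp.lmapDomain_apply]

theorem LinearMap.exists_injective_not_injective_sub_not_injective_sub
    [FiniteDimensional K V] [FiniteDimensional K W]
    (hV : 2 ≤ finrank K V) (hVW : finrank K V ≤ finrank K W) {f g : V →ₗ[K] W}
    (hf : f ≠ 0) (hg : g ≠ 0) (hfg : 2 ≤ finrank K (range (f - g))) :
    ∃ h : V →ₗ[K] W, Injective h ∧ ¬Injective (h - f) ∧ ¬Injective (h - g) := by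
  obtain ⟨x, z, hxz, hfgxz⟩ := exists_linearIndependent_pair_apply hV hf hg hfg
  obtain ⟨h, hinj, hh⟩ := exists_injective_forall_apply_eq hVW hxz hfgxz
  refine ⟨h, hinj, fun hi => hxz.ne_zero 0 ?_, fun hi => hxz.ne_zero 1 ?_⟩
  · exact (injective_iff_map_eq_zero _).mp hi x (by simpa using sub_eq_zero.mpr (hh 0))
  · exact (injective_iff_map_eq_zero _).mp hi z (by simpa using sub_eq_zero.mpr (hh 1))

end LinearMap

section Matrix

variable {m n K : Type*} [Fintype n] [Field K]

theorem Matrix.rank_eq_card_iff_injective (M : Matrix m n K) :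
    M.rank = Fintype.card n ↔ Injective M.mulVecLin := by
  rw [Matrix.rank, ← ker_eq_bot, ← Submodule.finrank_eq_zero]
  have := M.mulVecLin.finrank_range_add_finrank_ker
  rw [Module.finrank_fintype_fun_eq_card] at this
  omega

theorem Matrix.rank_eq_zero_iff (M : Matrix m n K) : M.rank = 0 ↔ M = 0 := by
  classical
  rw [Matrix.rank, Submodule.finrank_eq_zero, range_eq_bot, ← Matrix.toLin'_apply',
    LinearEquiv.map_eq_zero_iff]

theorem Matrix.rank_sub_eq_card_or_of_rank_sub_eq_one {A B X : Matrix m n K}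
    (hAB : (A - B).rank = 1) (t : K) (hX : (X - (A + t • (A - B))).rank = Fintype.card n) :
    (X - A).rank = Fintype.card n ∨ (X - B).rank = Fintype.card n := by
  classical
  simp only [rank_eq_card_iff_injective, ← Matrix.toLin'_apply'] at hX ⊢
  rw [← sub_add_sub_cancel X (A + t • (A - B)) A, ← sub_add_sub_cancel X (A + t • (A - B)) B,
    add_sub_cancel_left, show A + t • (A - B) - B = (t + 1) • (A - B) by module,
    map_add, map_add, map_smul, map_smul]
  exact injective_add_smul_or_injective_add_smul hX hAB (by simp)

theorem Matrix.exists_rank_sub_eq_card_and_rank_sub_ne_card [Fintype m]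
    (hnm : Fintype.card n ≤ Fintype.card m) (hn : 2 ≤ Fintype.card n) {A B R : Matrix m n K}
    (hAB : 2 ≤ (A - B).rank) (hRA : R ≠ A) (hRB : R ≠ B) :
    ∃ X : Matrix m n K, (X - R).rank = Fintype.card n ∧
      (X - A).rank ≠ Fintype.card n ∧ (X - B).rank ≠ Fintype.card n := by
  classical
  obtain ⟨h, hinj, hA, hB⟩ := exists_injective_not_injective_sub_not_injective_sub
    (f := Matrix.toLin' (A - R)) (g := Matrix.toLin' (B - R)) (by simpa using hn)
    (by simpa using hnm) (by simpa [sub_eq_zero] using hRA.symm)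
    (by simpa [sub_eq_zero] using hRB.symm) (by rwa [← map_sub, sub_sub_sub_cancel_right])
  have hX (C : Matrix m n K) :
      Matrix.toLin' (LinearMap.toMatrix' h + R - C) = h - Matrix.toLin' (C - R) := by
    rw [map_sub, map_add, Matrix.toLin'_toMatrix', map_sub]
    abel
  refine ⟨LinearMap.toMatrix' h + R, ?_, ?_, ?_⟩
  · rwa [rank_eq_card_iff_injective, ← Matrix.toLin'_apply', add_sub_cancel_right,
      Matrix.toLin'_toMatrix']
  · rwa [ne_eq, rank_eq_card_iff_injective, ← Matrix.toLin'_apply', hX]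
  · rwa [ne_eq, rank_eq_card_iff_injective, ← Matrix.toLin'_apply', hX]

end Matrix

theorem stmt_3_general (F : Type*) [Field F]
    (h3 : ∃ a b c : F, a ≠ b ∧ a ≠ c ∧ b ≠ c)
    (m n : ℕ) (hmn : n ≤ m) (hn : 2 ≤ n)
    (A B : Matrix (Fin m) (Fin n) F) (hAB : A ≠ B) :
    (A - B).rank = 1 ↔
      ∃ R : Matrix (Fin m) (Fin n) F, R ≠ A ∧ R ≠ B ∧
        ∀ X : Matrix (Fin m) (Fin n) F,
          (X - R).rank = n → (X - A).rank = n ∨ (X - B).rank = n := by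
  constructor
  · intro hD
    obtain ⟨t, ht0, ht1⟩ := exists_ne_and_ne_of_three_distinct h3 0 (-1)
    refine ⟨A + t • (A - B), ?_, ?_, fun X hX => ?_⟩
    · simpa [smul_eq_zero, ht0, sub_eq_zero] using hAB
    · rw [ne_eq, ← sub_eq_zero, show A + t • (A - B) - B = (t + 1) • (A - B) by module]
      exact smul_ne_zero (fun h => ht1 (eq_neg_of_add_eq_zero_left h)) (sub_ne_zero.mpr hAB)
    · simpa using Matrix.rank_sub_eq_card_or_of_rank_sub_eq_one hD t (by simpa using hX)
  · rintro ⟨R, hRA, hRB, hR⟩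
    by_contra hD
    have hD0 := (Matrix.rank_eq_zero_iff (A - B)).not.mpr (sub_ne_zero.mpr hAB)
    obtain ⟨X, hXR, hXA, hXB⟩ := Matrix.exists_rank_sub_eq_card_and_rank_sub_ne_card
      (by simpa using hmn) (by simpa using hn) (by omega) hRA hRB
    simp only [Fintype.card_fin] at hXR hXA hXB
    exact (hR X hXR).elim hXA hXB

theorem stmt_3 (F : Type*) [Field F] [DecidableEq F]
    (h3 : ∃ a b c : F, a ≠ b ∧ a ≠ c ∧ b ≠ c)
    (m n : ℕ) (hmn : n ≤ m) (hn : 2 ≤ n)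
    (A B : Matrix (Fin m) (Fin n) F) (hAB : A ≠ B) :
    (A - B).rank = 1 ↔
      ∃ R : Matrix (Fin m) (Fin n) F, R ≠ A ∧ R ≠ B ∧
        ∀ X : Matrix (Fin m) (Fin n) F,
          (X - R).rank = n → (X - A).rank = n ∨ (X - B).rank = n :=
  stmt_3_general F h3 m n hmn hn A B hAB
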